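/- Let S²T*⊗T_v* denote the space of trilinear forms B on V symmetric in the first two arguments and semi-basic in the third argument, and define σ²(P) : S²T*⊗T_v* → F ⊕ F by σ²(P)B = (σ_J B, σ_h B), where (σ_K B)(X,Y,Z) = B(X,KY,Z) − B(X,KZ,Y), and F is the space of trilinear forms alternating and semi-basic in the last two arguments. Let Λ³_v be the space of alternating trilinear forms on V semi-basic in every argument, and let τ : F ⊕ F → Λ³_v ⊕ Λ³_v ⊕ Λ³_v be given by τ(C₁,C₂) = (τ_J C₁, τ_h C₂, τ_h C₁ + τ_J C₂), where (τ_K C)(X,Y,Z) = C(KX,Y,Z) − C(KY,X,Z) + C(KZ,X,Y). Then the sequence is exact at F ⊕ F: the kernel of τ equals the image of σ²(P). -/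

import Mathlib

open Module

/-- Model of the tangent space of `J¹π` at a point: `V = ℝ^{n+1} × ℝ^n`, the first
factor spanned by the horizontal vectors `e_0, …, e_n` (`e_0` the time direction),
the second by the vertical vectors `f_1, …, f_n` (here `f_k = fbase ⟨k-1,_⟩`). -/
abbrev Vv (n : ℕ) : Type := (Fin (n + 1) → ℝ) × (Fin n → ℝ)

/-- A vector of `V` is vertical if it lies in the span of `f_1, …, f_n`,
i.e. its first component vanishes. -/
def IsVert {n : ℕ} (v : Vv n) : Prop := v.1 = 0

/-- The vertical endomorphism `J : V → V`: `J e_0 = 0`, `J e_i = f_i` (1 ≤ i ≤ n),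
`J f_i = 0`. -/
noncomputable def Jv (n : ℕ) : Vv n →ₗ[ℝ] Vv n :=
  LinearMap.prod 0
    ((LinearMap.funLeft ℝ ℝ Fin.succ).comp (LinearMap.fst ℝ (Fin (n + 1) → ℝ) (Fin n → ℝ)))

/-- The horizontal projector `h : V → V`: `h e_α = e_α` (0 ≤ α ≤ n), `h f_i = 0`. -/
noncomputable def Hv (n : ℕ) : Vv n →ₗ[ℝ] Vv n :=
  LinearMap.prod (LinearMap.fst ℝ (Fin (n + 1) → ℝ) (Fin n → ℝ)) 0

set_option maxSynthPendingDepth 3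
set_option synthInstance.maxHeartbeats 400000

/-- `F`: the space of trilinear forms on `V` that are alternating in the last two
arguments and semi-basic in the last two arguments (model of `T* ⊗ Λ²T_v*`). -/
noncomputable def Fsub (n : ℕ) : Submodule ℝ (Vv n →ₗ[ℝ] Vv n →ₗ[ℝ] Vv n →ₗ[ℝ] ℝ) where
  carrier := { C | (∀ X Y Z, C X Y Z = - C X Z Y) ∧
    (∀ X v Z, IsVert v → C X v Z = 0) ∧
    (∀ X Y v, IsVert v → C X Y v = 0) }
  add_mem' := by
    rintro A B ⟨a1, a2, a3⟩ ⟨b1, b2, b3⟩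
    refine ⟨fun X Y Z => ?_, fun X v Z hv => ?_, fun X Y v hv => ?_⟩
    · simp only [LinearMap.add_apply]; rw [a1, b1]; ring
    · simp [a2 X v Z hv, b2 X v Z hv]
    · simp [a3 X Y v hv, b3 X Y v hv]
  zero_mem' := by
    refine ⟨fun X Y Z => ?_, fun X v Z hv => ?_, fun X Y v hv => ?_⟩ <;> simp
  smul_mem' := by
    rintro c A ⟨a1, a2, a3⟩
    refine ⟨fun X Y Z => ?_, fun X v Z hv => ?_, fun X Y v hv => ?_⟩
    · simp only [LinearMap.smul_apply, smul_eq_mul]; rw [a1]; ring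
    · simp [a2 X v Z hv]
    · simp [a3 X Y v hv]

/-- `S²T* ⊗ T_v*`: the space of trilinear forms on `V` that are symmetric in the
first two arguments and semi-basic in the third argument. -/
noncomputable def S2Tv (n : ℕ) : Submodule ℝ (Vv n →ₗ[ℝ] Vv n →ₗ[ℝ] Vv n →ₗ[ℝ] ℝ) where
  carrier := { B | (∀ X Y Z, B X Y Z = B Y X Z) ∧ (∀ X Y v, IsVert v → B X Y v = 0) }
  add_mem' := by
    rintro A B ⟨a1, a2⟩ ⟨b1, b2⟩
    refine ⟨fun X Y Z => ?_, fun X Y v hv => ?_⟩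
    · simp only [LinearMap.add_apply]; rw [a1, b1]
    · simp [a2 X Y v hv, b2 X Y v hv]
  zero_mem' := by refine ⟨fun X Y Z => ?_, fun X Y v hv => ?_⟩ <;> simp
  smul_mem' := by
    rintro c A ⟨a1, a2⟩
    refine ⟨fun X Y Z => ?_, fun X Y v hv => ?_⟩
    · simp only [LinearMap.smul_apply, smul_eq_mul]; rw [a1]
    · simp [a2 X Y v hv]

/-- The alternating operator `τ_K`:
`(τ_K C)(X,Y,Z) = C(KX,Y,Z) − C(KY,X,Z) + C(KZ,X,Y)`. -/
noncomputable def tauF (n : ℕ) (K : Vv n →ₗ[ℝ] Vv n)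
    (C : Vv n →ₗ[ℝ] Vv n →ₗ[ℝ] Vv n →ₗ[ℝ] ℝ) : Vv n → Vv n → Vv n → ℝ :=
  fun X Y Z => C (K X) Y Z - C (K Y) X Z + C (K Z) X Y

/-- The prolonged symbol `σ_K`: `(σ_K B)(X,Y,Z) = B(X,KY,Z) − B(X,KZ,Y)`. -/
noncomputable def sigmaF (n : ℕ) (K : Vv n →ₗ[ℝ] Vv n)
    (B : Vv n →ₗ[ℝ] Vv n →ₗ[ℝ] Vv n →ₗ[ℝ] ℝ) : Vv n → Vv n → Vv n → ℝ :=
  fun X Y Z => B X (K Y) Z - B X (K Z) Y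

/-!
Since `B` is symmetric in its first two arguments, `τ_L (σ_K B) + τ_K (σ_L B) = 0` for all `K`, `L`;
taking `(K, L) = (J, J), (h, h), (J, h)` puts the image of `σ²(P)` inside the kernel of `τ`.

Conversely, a form `D` alternating in its last two arguments with vanishing cyclic sum is the
alternation `T(x,y,z) - T(x,z,y)` of `T(x,y,z) = (D(x,y,z) + D(y,x,z))/3`, which is symmetric in
`x, y` (`symLift`). Likewise, a pair `(A, G)` satisfying the mixed cyclic identity is the pair of
alternations, in the slots `(2,3)` and `(1,3)`, of one explicit form (`mixedLift`). The three
components of `τ(C₁, C₂) = 0` are exactly these conditions for `C₂ ∘ h`, `C₁ ∘ J` and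
`(C₁ ∘ h, C₂ ∘ J)`. The corresponding lifts, transported by the map `θ : f_i ↦ e_i` inverting `J`,
are the horizontal, vertical and mixed blocks of `B`. Only the time direction `e₀ ∈ ker J` needs
explicit corrections.
-/

namespace LinearMap

variable {R M : Type*} [CommSemiring R] [AddCommMonoid M] [Module R M]

def compl₁₂₃ (T : M →ₗ[R] M →ₗ[R] M →ₗ[R] R) (f g k : M →ₗ[R] M) :
    M →ₗ[R] M →ₗ[R] M →ₗ[R] R :=
  (T.compl₁₂ f g).compr₂ (lcomp R R k)

@[simp]
theorem compl₁₂₃_apply (T : M →ₗ[R] M →ₗ[R] M →ₗ[R] R) (f g k : M →ₗ[R] M) (x y z : M) :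
    T.compl₁₂₃ f g k x y z = T (f x) (g y) (k z) := rfl

def swap₁₃ (T : M →ₗ[R] M →ₗ[R] M →ₗ[R] R) : M →ₗ[R] M →ₗ[R] M →ₗ[R] R :=
  ((lflip (R₀ := R)).toLinearMap ∘ₗ T.flip).flip

@[simp]
theorem swap₁₃_apply (T : M →ₗ[R] M →ₗ[R] M →ₗ[R] R) (x y z : M) :
    T.swap₁₃ x y z = T z y x := rfl

end LinearMap

section Lifts

variable {𝕜 M : Type*} [Field 𝕜] [CharZero 𝕜] [AddCommGroup M] [Module 𝕜 M]

def symLift (D : M →ₗ[𝕜] M →ₗ[𝕜] M →ₗ[𝕜] 𝕜) : M →ₗ[𝕜] M →ₗ[𝕜] M →ₗ[𝕜] 𝕜 :=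
  (3 : 𝕜)⁻¹ • (D + D.flip)

theorem symLift_apply (D : M →ₗ[𝕜] M →ₗ[𝕜] M →ₗ[𝕜] 𝕜) (x y z : M) :
    symLift D x y z = (D x y z + D y x z) / 3 := by
  simp only [symLift, LinearMap.smul_apply, LinearMap.add_apply, LinearMap.flip_apply, smul_eq_mul]
  ring

theorem symLift_sub_swap {D : M →ₗ[𝕜] M →ₗ[𝕜] M →ₗ[𝕜] 𝕜}
    (hD : ∀ x y z, D x y z = - D x z y) (hcyc : ∀ x y z, D x y z - D y x z + D z x y = 0)
    (x y z : M) : symLift D x y z - symLift D x z y = D x y z := by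
  simp only [symLift_apply]
  linear_combination (-1/3 : 𝕜) * hcyc x y z - (1/3 : 𝕜) * hD x y z

def mixedLift (A G : M →ₗ[𝕜] M →ₗ[𝕜] M →ₗ[𝕜] 𝕜) : M →ₗ[𝕜] M →ₗ[𝕜] M →ₗ[𝕜] 𝕜 :=
  (2 : 𝕜)⁻¹ • G.flip + (3 : 𝕜)⁻¹ • (A + A.swap₁₃) - (6 : 𝕜)⁻¹ • (G + G.swap₁₃)

theorem mixedLift_apply (A G : M →ₗ[𝕜] M →ₗ[𝕜] M →ₗ[𝕜] 𝕜) (x y z : M) :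
    mixedLift A G x y z = G y x z / 2 + (A x y z + A z y x) / 3 - (G x y z + G z y x) / 6 := by
  simp only [mixedLift, LinearMap.sub_apply, LinearMap.add_apply, LinearMap.smul_apply,
    LinearMap.flip_apply, LinearMap.swap₁₃_apply, smul_eq_mul]
  ring

variable {A G : M →ₗ[𝕜] M →ₗ[𝕜] M →ₗ[𝕜] 𝕜}

theorem mixedLift_sub_swap₂₃ (hA : ∀ x y z, A x y z = - A x z y)
    (hG : ∀ x y z, G x y z = - G x z y)
    (hAG : ∀ x y z, (A x y z - A y x z + A z x y) + (G x y z - G y x z + G z x y) = 0)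
    (x y z : M) : mixedLift A G x y z - mixedLift A G x z y = A x y z := by
  simp only [mixedLift_apply]
  linear_combination (-1/3 : 𝕜) * hA x y z + (1/6 : 𝕜) * hG x y z - (1/2 : 𝕜) * hAG x y z
    - (1/3 : 𝕜) * hA y x z + (1/6 : 𝕜) * hG y x z - (1/6 : 𝕜) * hAG y x z + (1/2 : 𝕜) * hA z x y

theorem mixedLift_sub_swap₁₃ (hG : ∀ x y z, G x y z = - G x z y) (x y z : M) :
    mixedLift A G y x z - mixedLift A G z x y = G x y z := by
  simp only [mixedLift_apply]
  linear_combination (-1/2 : 𝕜) * hG x y z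

end Lifts

section Operators

variable (n : ℕ)

noncomputable def timeVec : Vv n := (Pi.single 0 1, 0)

noncomputable def timeProj : Vv n →ₗ[ℝ] Vv n :=
  (LinearMap.proj 0 ∘ₗ LinearMap.fst ℝ _ _).smulRight (timeVec n)

noncomputable def spaceProj : Vv n →ₗ[ℝ] Vv n := Hv n - timeProj n

noncomputable def horOfVert : Vv n →ₗ[ℝ] Vv n :=
  LinearMap.inl ℝ _ _ ∘ₗ (Fin.consLinearEquiv ℝ fun _ => ℝ).toLinearMap ∘ₗ
    LinearMap.prod 0 (LinearMap.snd ℝ _ _)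

variable {n} (x : Vv n)

theorem Hv_apply : Hv n x = (x.1, 0) := rfl
theorem Jv_apply : Jv n x = (0, fun i => x.1 i.succ) := rfl
theorem timeProj_apply : timeProj n x = x.1 0 • timeVec n := rfl
theorem spaceProj_apply : spaceProj n x = Hv n x - timeProj n x := rfl
theorem horOfVert_apply : horOfVert n x = (Fin.cons 0 x.2, 0) := rfl

@[simp] theorem Hv_Hv : Hv n (Hv n x) = Hv n x := rfl
@[simp] theorem Hv_Jv : Hv n (Jv n x) = 0 := rfl
@[simp] theorem Jv_Hv : Jv n (Hv n x) = Jv n x := rfl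
@[simp] theorem timeProj_Hv : timeProj n (Hv n x) = timeProj n x := rfl

@[simp] theorem Hv_timeProj : Hv n (timeProj n x) = timeProj n x := by
  ext i <;> simp [timeProj_apply, Hv_apply, timeVec]

@[simp] theorem Jv_timeProj : Jv n (timeProj n x) = 0 := by
  ext i <;> simp [timeProj_apply, Jv_apply, timeVec]

@[simp] theorem timeProj_Jv : timeProj n (Jv n x) = 0 := by
  simp [timeProj_apply, Jv_apply]

@[simp] theorem horOfVert_Hv : horOfVert n (Hv n x) = 0 := by
  ext i
  · refine Fin.cases ?_ (fun i => ?_) i <;> simp [horOfVert_apply, Hv_apply]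
  · rfl

@[simp] theorem horOfVert_Jv : horOfVert n (Jv n x) = spaceProj n x := by
  ext i
  · refine Fin.cases ?_ (fun i => ?_) i <;>
      simp [horOfVert_apply, Jv_apply, spaceProj_apply, Hv_apply, timeProj_apply, timeVec]
  · simp [horOfVert_apply, spaceProj_apply, Hv_apply, timeProj_apply, timeVec]

theorem Jv_horOfVert : Jv n (horOfVert n x) = x - Hv n x := by
  ext i <;> simp [horOfVert_apply, Jv_apply, Hv_apply]

end Operators

theorem apply_timeProj_comm {n : ℕ} (T : Vv n →ₗ[ℝ] Vv n →ₗ[ℝ] Vv n →ₗ[ℝ] ℝ) (x y z : Vv n) :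
    T (timeProj n x) y (timeProj n z) = T (timeProj n z) y (timeProj n x) := by
  simp only [timeProj_apply, map_smul, LinearMap.smul_apply, smul_eq_mul]
  ring

namespace Fsub

variable {n : ℕ} {C : Vv n →ₗ[ℝ] Vv n →ₗ[ℝ] Vv n →ₗ[ℝ] ℝ} (hC : C ∈ Fsub n)
include hC

theorem antisymm (x y z : Vv n) : C x y z = - C x z y := hC.1 x y z

theorem apply_Hv (x y z : Vv n) : C x (Hv n y) z = C x y z := by
  have := hC.2.1 x (y - Hv n y) z (by simp [IsVert, Hv_apply])
  rwa [map_sub, LinearMap.sub_apply, sub_eq_zero, eq_comm] at this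

theorem apply_Hv_right (x y z : Vv n) : C x y (Hv n z) = C x y z := by
  rw [antisymm hC, apply_Hv hC, ← antisymm hC]

theorem apply_Jv (x y z : Vv n) : C x (Jv n y) z = 0 := hC.2.1 x (Jv n y) z rfl

theorem apply_timeProj_timeProj (x y z : Vv n) : C x (timeProj n y) (timeProj n z) = 0 := by
  have h := antisymm hC x (timeVec n) (timeVec n)
  simp only [timeProj_apply, map_smul, LinearMap.smul_apply, smul_eq_mul]
  linear_combination (y.1 0 * z.1 0 / 2) * h

end Fsub

section Blocks

variable {n : ℕ}

noncomputable def hhBlock (C₂ : Vv n →ₗ[ℝ] Vv n →ₗ[ℝ] Vv n →ₗ[ℝ] ℝ) :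
    Vv n →ₗ[ℝ] Vv n →ₗ[ℝ] Vv n →ₗ[ℝ] ℝ :=
  symLift (C₂ ∘ₗ Hv n)

/- Because `J e₀ = 0`, `symLift (C₁ ∘ J)` recovers only two thirds of the components with `e₀` in
the last slot; the factor `1 + 1/2` on `e₀` restores them. -/
noncomputable def vvBlock (C₁ : Vv n →ₗ[ℝ] Vv n →ₗ[ℝ] Vv n →ₗ[ℝ] ℝ) :
    Vv n →ₗ[ℝ] Vv n →ₗ[ℝ] Vv n →ₗ[ℝ] ℝ :=
  (symLift (C₁ ∘ₗ Jv n)).compl₁₂₃ (horOfVert n) (horOfVert n)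
    (LinearMap.id + (2 : ℝ)⁻¹ • timeProj n)

/- On spatial arguments (no `e₀` component) in the first and last slots this is the mixed lift;
its components along `e₀` in those slots are forced by `σ_J B = C₁` and `σ_h B = C₂`. -/
noncomputable def hvCore (C₁ C₂ : Vv n →ₗ[ℝ] Vv n →ₗ[ℝ] Vv n →ₗ[ℝ] ℝ) :
    Vv n →ₗ[ℝ] Vv n →ₗ[ℝ] Vv n →ₗ[ℝ] ℝ :=
  (mixedLift (C₁ ∘ₗ Hv n) (C₂ ∘ₗ Jv n)).compl₁₂₃ (spaceProj n) LinearMap.id (spaceProj n)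
    + C₁.compl₁₂₃ (Hv n) LinearMap.id (timeProj n)
    + (C₁.compl₁₂₃ (spaceProj n) LinearMap.id (timeProj n)).swap₁₃
    + C₂.flip.compl₁₂₃ (timeProj n) (Jv n) (spaceProj n)

noncomputable def hvBlock (C₁ C₂ : Vv n →ₗ[ℝ] Vv n →ₗ[ℝ] Vv n →ₗ[ℝ] ℝ) :
    Vv n →ₗ[ℝ] Vv n →ₗ[ℝ] Vv n →ₗ[ℝ] ℝ :=
  (hvCore C₁ C₂).compl₁₂₃ LinearMap.id (horOfVert n) LinearMap.id
    + ((hvCore C₁ C₂).compl₁₂₃ LinearMap.id (horOfVert n) LinearMap.id).flip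

variable {C₁ C₂ : Vv n →ₗ[ℝ] Vv n →ₗ[ℝ] Vv n →ₗ[ℝ] ℝ}

theorem sigmaF_hhBlock_Hv (hC₂ : C₂ ∈ Fsub n) (hτ : ∀ X Y Z, tauF n (Hv n) C₂ X Y Z = 0)
    (X Y Z : Vv n) : sigmaF n (Hv n) (hhBlock C₂) X Y Z = C₂ (Hv n X) Y Z := by
  have h := symLift_sub_swap (D := C₂ ∘ₗ Hv n) (fun x => Fsub.antisymm hC₂ (Hv n x)) hτ X Y Z
  simpa only [sigmaF, hhBlock, symLift_apply, LinearMap.comp_apply, Hv_Hv, Fsub.apply_Hv hC₂]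
    using h

theorem sigmaF_hhBlock_Jv (hC₂ : C₂ ∈ Fsub n) (X Y Z : Vv n) :
    sigmaF n (Jv n) (hhBlock C₂) X Y Z = 0 := by
  simp [sigmaF, hhBlock, symLift_apply, Fsub.apply_Jv hC₂]

theorem sigmaF_vvBlock_Hv (X Y Z : Vv n) : sigmaF n (Hv n) (vvBlock C₁) X Y Z = 0 := by
  simp [sigmaF, vvBlock]

theorem sigmaF_vvBlock_Jv (hC₁ : C₁ ∈ Fsub n) (hτ : ∀ X Y Z, tauF n (Jv n) C₁ X Y Z = 0)
    (X Y Z : Vv n) : sigmaF n (Jv n) (vvBlock C₁) X Y Z = C₁ (X - Hv n X) Y Z := by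
  set x := horOfVert n X
  have anti := Fsub.antisymm hC₁ (Jv n x)
  have τYZ := hτ x Y Z
  have τYpZ := hτ x Y (timeProj n Z)
  have τZpY := hτ x Z (timeProj n Y)
  simp only [tauF, Jv_timeProj, map_zero, LinearMap.zero_apply, add_zero] at τYZ τYpZ τZpY
  rw [← Jv_horOfVert]
  simp only [sigmaF, vvBlock, LinearMap.compl₁₂₃_apply, symLift_apply, LinearMap.comp_apply,
    LinearMap.add_apply, LinearMap.smul_apply, LinearMap.id_apply, horOfVert_Jv, spaceProj_apply,
    map_add, map_sub, map_smul, LinearMap.sub_apply, Jv_Hv, Jv_timeProj, Fsub.apply_Hv hC₁,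
    Fsub.apply_timeProj_timeProj hC₁, smul_eq_mul, map_zero, LinearMap.zero_apply]
  linear_combination (-1/3 : ℝ) * anti Y Z - (1/3 : ℝ) * anti (timeProj n Y) Z
    + (1/3 : ℝ) * anti (timeProj n Z) Y - (1/3 : ℝ) * τYZ - (1/6 : ℝ) * τYpZ + (1/6 : ℝ) * τZpY

theorem sigmaF_hvBlock_Jv (hC₁ : C₁ ∈ Fsub n) (hC₂ : C₂ ∈ Fsub n)
    (hτ : ∀ X Y Z, tauF n (Hv n) C₁ X Y Z + tauF n (Jv n) C₂ X Y Z = 0) (X Y Z : Vv n) :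
    sigmaF n (Jv n) (hvBlock C₁ C₂) X Y Z = C₁ (Hv n X) Y Z := by
  have key := mixedLift_sub_swap₂₃ (A := C₁ ∘ₗ Hv n) (G := C₂ ∘ₗ Jv n)
    (fun x => Fsub.antisymm hC₁ (Hv n x)) (fun x => Fsub.antisymm hC₂ (Jv n x)) hτ
    (spaceProj n X) (spaceProj n Y) (spaceProj n Z)
  have compat := hτ (timeProj n X) (spaceProj n Y) (spaceProj n Z)
  have anti := Fsub.antisymm hC₁
  simp only [tauF] at compat
  simp only [sigmaF, hvBlock, hvCore, LinearMap.add_apply, LinearMap.flip_apply,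
    LinearMap.compl₁₂₃_apply, LinearMap.swap₁₃_apply, LinearMap.comp_apply, LinearMap.id_apply,
    horOfVert_Jv, spaceProj_apply, map_sub, LinearMap.sub_apply, Hv_Hv, Hv_Jv, Jv_Hv,
    Hv_timeProj, Jv_timeProj, timeProj_Jv, Fsub.apply_Hv hC₁, Fsub.apply_Hv_right hC₁,
    Fsub.apply_Hv_right hC₂, Fsub.apply_timeProj_timeProj hC₁, Fsub.apply_timeProj_timeProj hC₂,
    map_zero, LinearMap.zero_apply, sub_zero, zero_sub, sub_self, add_zero] at key compat ⊢
  linear_combination key - compat + anti (Hv n Z) Y (timeProj n X)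
    - anti (timeProj n Z) Y (timeProj n X) - anti (Hv n X) Z (timeProj n Y)
    - anti (Hv n Y) Z (timeProj n X) + anti (timeProj n Y) Z (timeProj n X)

theorem sigmaF_hvBlock_Hv (hC₂ : C₂ ∈ Fsub n) (X Y Z : Vv n) :
    sigmaF n (Hv n) (hvBlock C₁ C₂) X Y Z = C₂ (X - Hv n X) Y Z := by
  set x := horOfVert n X
  have key := mixedLift_sub_swap₁₃ (A := C₁ ∘ₗ Hv n) (G := C₂ ∘ₗ Jv n)
    (fun x => Fsub.antisymm hC₂ (Jv n x)) x (spaceProj n Y) (spaceProj n Z)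
  have rank_one := apply_timeProj_comm C₁ Y x Z
  have anti := Fsub.antisymm hC₂ (Jv n x)
  rw [← Jv_horOfVert]
  simp only [sigmaF, hvBlock, hvCore, LinearMap.add_apply, LinearMap.flip_apply,
    LinearMap.compl₁₂₃_apply, LinearMap.swap₁₃_apply, LinearMap.comp_apply, LinearMap.id_apply,
    spaceProj_apply, map_sub, LinearMap.sub_apply, Hv_Hv, timeProj_Hv, horOfVert_Hv,
    Fsub.apply_Hv hC₂, Fsub.apply_Hv_right hC₂, Fsub.apply_timeProj_timeProj hC₂, map_zero,
    LinearMap.zero_apply, sub_zero, zero_add] at key ⊢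
  linear_combination key + rank_one - anti (timeProj n Z) Y

end Blocks

section Preimage

variable {n : ℕ} {C₁ C₂ : Vv n →ₗ[ℝ] Vv n →ₗ[ℝ] Vv n →ₗ[ℝ] ℝ}

noncomputable def sigmaPreimage (C₁ C₂ : Vv n →ₗ[ℝ] Vv n →ₗ[ℝ] Vv n →ₗ[ℝ] ℝ) :
    Vv n →ₗ[ℝ] Vv n →ₗ[ℝ] Vv n →ₗ[ℝ] ℝ :=
  hhBlock C₂ + vvBlock C₁ + hvBlock C₁ C₂

theorem sigmaPreimage_mem_S2Tv (hC₁ : C₁ ∈ Fsub n) (hC₂ : C₂ ∈ Fsub n) :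
    sigmaPreimage C₁ C₂ ∈ S2Tv n := by
  refine ⟨fun X Y Z => ?_, fun X Y v hv => ?_⟩
  · simp only [sigmaPreimage, hhBlock, vvBlock, hvBlock, LinearMap.add_apply, LinearMap.flip_apply,
      LinearMap.compl₁₂₃_apply, symLift_apply]
    ring
  · have hHv : Hv n v = 0 := Prod.ext hv rfl
    have htime : timeProj n v = 0 := by simp [timeProj_apply, show v.1 = 0 from hv]
    simp [sigmaPreimage, hhBlock, vvBlock, hvBlock, hvCore, symLift_apply, spaceProj_apply, hHv,
      htime, hC₁.2.2 _ _ v hv, hC₂.2.2 _ _ v hv]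

theorem sigmaF_add (K : Vv n →ₗ[ℝ] Vv n) (B₁ B₂ : Vv n →ₗ[ℝ] Vv n →ₗ[ℝ] Vv n →ₗ[ℝ] ℝ)
    (X Y Z : Vv n) : sigmaF n K (B₁ + B₂) X Y Z = sigmaF n K B₁ X Y Z + sigmaF n K B₂ X Y Z := by
  simp only [sigmaF, LinearMap.add_apply]
  ring

theorem sigmaF_sigmaPreimage_Jv (hC₁ : C₁ ∈ Fsub n) (hC₂ : C₂ ∈ Fsub n)
    (hτJ : ∀ X Y Z, tauF n (Jv n) C₁ X Y Z = 0)
    (hτmix : ∀ X Y Z, tauF n (Hv n) C₁ X Y Z + tauF n (Jv n) C₂ X Y Z = 0) (X Y Z : Vv n) :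
    sigmaF n (Jv n) (sigmaPreimage C₁ C₂) X Y Z = C₁ X Y Z := by
  rw [sigmaPreimage, sigmaF_add, sigmaF_add, sigmaF_hhBlock_Jv hC₂, sigmaF_vvBlock_Jv hC₁ hτJ,
    sigmaF_hvBlock_Jv hC₁ hC₂ hτmix, map_sub, LinearMap.sub_apply, LinearMap.sub_apply]
  ring

theorem sigmaF_sigmaPreimage_Hv (hC₂ : C₂ ∈ Fsub n) (hτH : ∀ X Y Z, tauF n (Hv n) C₂ X Y Z = 0)
    (X Y Z : Vv n) : sigmaF n (Hv n) (sigmaPreimage C₁ C₂) X Y Z = C₂ X Y Z := by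
  rw [sigmaPreimage, sigmaF_add, sigmaF_add, sigmaF_hhBlock_Hv hC₂ hτH, sigmaF_vvBlock_Hv,
    sigmaF_hvBlock_Hv hC₂, map_sub, LinearMap.sub_apply, LinearMap.sub_apply]
  ring

end Preimage

section TauSigma

variable {n : ℕ} {K L : Vv n →ₗ[ℝ] Vv n} {B C D : Vv n →ₗ[ℝ] Vv n →ₗ[ℝ] Vv n →ₗ[ℝ] ℝ}

theorem tauF_add_tauF_of_sigmaF (hB : ∀ X Y Z, B X Y Z = B Y X Z)
    (hC : ∀ X Y Z, sigmaF n K B X Y Z = C X Y Z) (hD : ∀ X Y Z, sigmaF n L B X Y Z = D X Y Z)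
    (X Y Z : Vv n) : tauF n L C X Y Z + tauF n K D X Y Z = 0 := by
  simp only [tauF, ← hC, ← hD, sigmaF]
  linear_combination hB (L X) (K Y) Z - hB (L Y) (K X) Z - hB (L X) (K Z) Y
    + hB (L Y) (K Z) X + hB (L Z) (K X) Y - hB (L Z) (K Y) X

theorem tauF_eq_zero_of_sigmaF (hB : ∀ X Y Z, B X Y Z = B Y X Z)
    (hC : ∀ X Y Z, sigmaF n K B X Y Z = C X Y Z) (X Y Z : Vv n) : tauF n K C X Y Z = 0 := by
  linarith [tauF_add_tauF_of_sigmaF hB hC hC X Y Z]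

end TauSigma

theorem stmt7_general (n : ℕ) :
    ∀ C₁ ∈ Fsub n, ∀ C₂ ∈ Fsub n,
      (((∀ X Y Z, tauF n (Jv n) C₁ X Y Z = 0) ∧
        (∀ X Y Z, tauF n (Hv n) C₂ X Y Z = 0) ∧
        (∀ X Y Z, tauF n (Hv n) C₁ X Y Z + tauF n (Jv n) C₂ X Y Z = 0)) ↔
      (∃ B ∈ S2Tv n,
        (∀ X Y Z, sigmaF n (Jv n) B X Y Z = C₁ X Y Z) ∧
        (∀ X Y Z, sigmaF n (Hv n) B X Y Z = C₂ X Y Z))) := by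
  intro C₁ hC₁ C₂ hC₂
  constructor
  · rintro ⟨hτJ, hτH, hτmix⟩
    exact ⟨sigmaPreimage C₁ C₂, sigmaPreimage_mem_S2Tv hC₁ hC₂,
      sigmaF_sigmaPreimage_Jv hC₁ hC₂ hτJ hτmix, sigmaF_sigmaPreimage_Hv hC₂ hτH⟩
  · rintro ⟨B, hB, hσJ, hσH⟩
    exact ⟨tauF_eq_zero_of_sigmaF hB.1 hσJ, tauF_eq_zero_of_sigmaF hB.1 hσH,
      tauF_add_tauF_of_sigmaF hB.1 hσJ hσH⟩

/-- Exactness at `F ⊕ F`: the kernel of `τ(C₁,C₂) = (τ_J C₁, τ_h C₂, τ_h C₁ + τ_J C₂)`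
equals the image of `σ²(P) = (σ_J, σ_h) : S²T*⊗T_v* → F ⊕ F`. -/
theorem stmt7 (n : ℕ) (hn : 1 ≤ n) :
    ∀ C₁ ∈ Fsub n, ∀ C₂ ∈ Fsub n,
      (((∀ X Y Z, tauF n (Jv n) C₁ X Y Z = 0) ∧
        (∀ X Y Z, tauF n (Hv n) C₂ X Y Z = 0) ∧
        (∀ X Y Z, tauF n (Hv n) C₁ X Y Z + tauF n (Jv n) C₂ X Y Z = 0)) ↔
      (∃ B ∈ S2Tv n,
        (∀ X Y Z, sigmaF n (Jv n) B X Y Z = C₁ X Y Z) ∧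
        (∀ X Y Z, sigmaF n (Hv n) B X Y Z = C₂ X Y Z))) :=
  stmt7_general n
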